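/- A k-polymatroid ρ on ground set E = {e} is an excluded minor for the class of k-polymatroids whose k-natural matroid avoids U_{a,b} and U_{b−a,b} (b ≥ 2a, k ≥ 2(b−a)) if and only if a ≤ ρ({e}) ≤ k − a. -/

import Mathlib

/-!
Contracting `c` elements of `U_{m,k}` and deleting `d` others leaves the uniform matroid of rank
`min (m - c) (k - c - d)` on `k - c - d` elements, so (taking `c = m - a'`) `U_{m,k}` has a
`U_{a',b}`-minor with `a' < b ≤ k` exactly when `a' ≤ m ≤ k - b + a'`. For `a' = a` and
`a' = b - a` these two windows together cover `a ≤ m ≤ k - a`; `k ≥ 2(b - a)` makes them overlap.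
-/

/-- A finite matroid given by its rank function on a finite ground set. -/
structure FinMatroid (α : Type*) [DecidableEq α] where
  E : Finset α
  r : Finset α → ℕ
  r_le_card : ∀ ⦃X⦄, X ⊆ E → r X ≤ X.card
  mono : ∀ ⦃X Y⦄, X ⊆ Y → Y ⊆ E → r X ≤ r Y
  submod : ∀ ⦃X⦄, X ⊆ E → ∀ ⦃Y⦄, Y ⊆ E → r (X ∪ Y) + r (X ∩ Y) ≤ r X + r Y

namespace FinMatroid
variable {α : Type*} [DecidableEq α]

/-- The nullity `η(M) = |E| - r(M)`. -/
def nullity (M : FinMatroid α) : ℕ := M.E.card - M.r M.E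

/-- `M` has a minor isomorphic to the uniform matroid `U_{a,b}`: one can contract a set `C`
and delete a disjoint set `D` so that the resulting minor has `b` elements and its rank
function is `X ↦ min |X| a` (which characterizes matroids isomorphic to `U_{a,b}`). -/
def HasUnifMinor (M : FinMatroid α) (a b : ℕ) : Prop :=
  ∃ C D : Finset α, C ⊆ M.E ∧ D ⊆ M.E ∧ Disjoint C D ∧
    ((M.E \ C) \ D).card = b ∧
    ∀ X ⊆ (M.E \ C) \ D, M.r (X ∪ C) - M.r C = min X.card a

end FinMatroid

/-- The uniform matroid of rank `m` on ground set `E`. -/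
def unifM {α : Type*} [DecidableEq α] (m : ℕ) (E : Finset α) : FinMatroid α where
  E := E
  r X := min X.card m
  r_le_card := fun X _ => min_le_left _ _
  mono := fun X Y hXY _ => min_le_min (Finset.card_le_card hXY) le_rfl
  submod := by
    intro X _ Y _
    have h1 := Finset.card_union_add_card_inter X Y
    have h2 := Finset.card_le_card (Finset.inter_subset_left (s₁ := X) (s₂ := Y))
    have h3 := Finset.card_le_card (Finset.inter_subset_right (s₁ := X) (s₂ := Y))
    have h4 := Finset.card_le_card (Finset.subset_union_left (s₁ := X) (s₂ := Y))
    have h5 := Finset.card_le_card (Finset.subset_union_right (s₁ := X) (s₂ := Y))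
    simp only [min_def]
    split_ifs <;> omega

section

open Finset

variable {α : Type*} [DecidableEq α]

@[simp] lemma unifM_E (m : ℕ) (E : Finset α) : (unifM m E).E = E := rfl

@[simp] lemma unifM_r (m : ℕ) (E : Finset α) (X : Finset α) :
    (unifM m E).r X = min #X m := rfl

lemma card_sdiff_sdiff_add_card_add_card {E C D : Finset α} (hC : C ⊆ E) (hD : D ⊆ E \ C) :
    #((E \ C) \ D) + #C + #D = #E := by
  rw [← card_sdiff_add_card_eq_card hC, ← card_sdiff_add_card_eq_card hD]
  ring

lemma le_and_le_of_unifM_hasUnifMinor {m a b : ℕ} {E : Finset α} (hab : a < b)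
    (h : (unifM m E).HasUnifMinor a b) : a ≤ m ∧ m ≤ #E - b + a := by
  obtain ⟨C, D, hC, hD, hCD, hcard, hrank⟩ := h
  simp only [unifM_E, unifM_r] at hC hD hcard hrank
  have hsplit := card_sdiff_sdiff_add_card_add_card hC (subset_sdiff.2 ⟨hD, hCD.symm⟩)
  have hrankE := hrank _ Subset.rfl
  rw [card_union_of_disjoint (disjoint_sdiff_self_left.mono_left sdiff_subset), hcard] at hrankE
  omega

lemma unifM_hasUnifMinor {m a b : ℕ} {E : Finset α} (hbE : b ≤ #E) (ham : a ≤ m)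
    (hmE : m ≤ #E - b + a) : (unifM m E).HasUnifMinor a b := by
  obtain ⟨C, hC, hCcard⟩ := exists_subset_card_eq (s := E) (n := m - a) (by omega)
  obtain ⟨D, hD, hDcard⟩ := exists_subset_card_eq (s := E \ C) (n := #E - b - (m - a))
    (by rw [card_sdiff_of_subset hC]; omega)
  have hsplit := card_sdiff_sdiff_add_card_add_card hC hD
  refine ⟨C, D, hC, hD.trans sdiff_subset, (disjoint_sdiff_self_left.mono_left hD).symm,
    by simp only [unifM_E]; omega, fun X hX => ?_⟩
  simp only [unifM_E, unifM_r] at hX ⊢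
  have hXb := card_le_card hX
  rw [card_union_of_disjoint (disjoint_sdiff_self_left.mono_left (hX.trans sdiff_subset))]
  omega

lemma unifM_hasUnifMinor_iff {m a b : ℕ} {E : Finset α} (hab : a < b) (hbE : b ≤ #E) :
    (unifM m E).HasUnifMinor a b ↔ a ≤ m ∧ m ≤ #E - b + a :=
  ⟨le_and_le_of_unifM_hasUnifMinor hab, fun h => unifM_hasUnifMinor hbE h.1 h.2⟩

end

theorem stmt18_general {α : Type*} [DecidableEq α] (a b k m : ℕ) (E : Finset α)
    (hE : E.card = k) (ha : 1 ≤ a) (hb : 2 * a ≤ b) (hk : 2 * (b - a) ≤ k) :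
    ((unifM m E).HasUnifMinor a b ∨ (unifM m E).HasUnifMinor (b - a) b) ↔
      (a ≤ m ∧ m ≤ k - a) := by
  subst hE
  rw [unifM_hasUnifMinor_iff (by omega) (by omega), unifM_hasUnifMinor_iff (by omega) (by omega)]
  omega

/-- A singleton `k`-polymatroid of rank `m` (whose `k`-natural matroid is
`U_{m,k}`) is an excluded minor for the class of `k`-polymatroids whose `k`-natural
matroid avoids `U_{a,b}` and `U_{b-a,b}` (`b ≥ 2a`, `k ≥ 2(b-a)`) iff `a ≤ m ≤ k-a`:
since its only proper minors are empty (hence in the class), this says `U_{m,k}` has a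
`U_{a,b}`- or `U_{b-a,b}`-minor iff `a ≤ m ≤ k-a`. -/
theorem stmt18 {α : Type*} [DecidableEq α] (a b k m : ℕ) (E : Finset α)
    (hE : E.card = k) (ha : 1 ≤ a) (hb : 2 * a ≤ b) (hk : 2 * (b - a) ≤ k)
    (hm : m ≤ k) :
    ((unifM m E).HasUnifMinor a b ∨ (unifM m E).HasUnifMinor (b - a) b) ↔
      (a ≤ m ∧ m ≤ k - a) :=
  stmt18_general a b k m E hE ha hb hk
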